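/- arXiv:2601.19597 — 2 statements merged into one kernel-verified Lean document; each statement's English description precedes it below -/
import Mathlib

section
/- Let (Z, μ) be a finite measure space and let q_θ, q_φ, q̃_θ, q̃_φ be probability densities, all strictly positive μ-a.e. Suppose q_θ ≥ c, q_φ ≥ c for some c > 0, and ‖q̃_θ − q_θ‖_∞ ≤ ε_θ ≤ c/2, ‖q̃_φ − q_φ‖_∞ ≤ ε_φ ≤ c/2. Then |½(D_KL(q_θ ‖ q̃_φ) − D_KL(q_θ ‖ q_φ)) + ½(D_KL(q_φ ‖ q̃_θ) − D_KL(q_φ ‖ q_θ))| ≤ (ε_θ + ε_φ)/c. -/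
/-!
Both differences have the form `∫ p log(p/r) - ∫ p log(p/q) = ∫ p (log q - log r)`, where `q` is a
density bounded below by `c` and `r` is a perturbation of `q` by at most `ε ≤ c/2`. Both `q` and `r`
then lie in `[c/2, ∞)`, where `log` is `2/c`-Lipschitz, so the integrand is at most `(2ε/c) p` and,
`p` being a probability density, each difference is at most `2ε/c`.
-/

open MeasureTheory Real

lemma abs_log_sub_log_le_abs_sub_div {m a b : ℝ} (hm : 0 < m) (ha : m ≤ a) (hb : m ≤ b) :
    |log a - log b| ≤ |a - b| / m := by
  have log_sub_le : ∀ x y : ℝ, m ≤ x → m ≤ y → log x - log y ≤ |x - y| / m := by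
    intro x y hx hy
    have hx0 : 0 < x := hm.trans_le hx
    have hy0 : 0 < y := hm.trans_le hy
    calc log x - log y = log (x / y) := (log_div hx0.ne' hy0.ne').symm
      _ ≤ x / y - 1 := log_le_sub_one_of_pos (div_pos hx0 hy0)
      _ = (x - y) / y := by field_simp
      _ ≤ |x - y| / m := div_le_div₀ (abs_nonneg _) (le_abs_self _) hm hy
  rw [abs_sub_le_iff]
  exact ⟨log_sub_le a b ha hb, abs_sub_comm a b ▸ log_sub_le b a hb ha⟩

lemma mul_log_div_sub_mul_log_div {p q r : ℝ} (hq : q ≠ 0) (hr : r ≠ 0) :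
    p * log (p / r) - p * log (p / q) = p * (log q - log r) := by
  rcases eq_or_ne p 0 with rfl | hp
  · simp
  · rw [log_div hp hr, log_div hp hq]
    ring

section

variable {Z : Type*} [MeasurableSpace Z] {μ : Measure Z} {p q r : Z → ℝ}

lemma abs_integral_mul_log_div_sub_le (hp : Integrable p μ) (hp_mass : ∫ z, p z ∂μ = 1)
    (hp_nonneg : 0 ≤ᵐ[μ] p) (hq : ∀ᵐ z ∂μ, q z ≠ 0) (hr : ∀ᵐ z ∂μ, r z ≠ 0) {K : ℝ}
    (hK : ∀ᵐ z ∂μ, |log (q z) - log (r z)| ≤ K)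
    (hpr : Integrable (fun z => p z * log (p z / r z)) μ)
    (hpq : Integrable (fun z => p z * log (p z / q z)) μ) :
    |∫ z, p z * log (p z / r z) ∂μ - ∫ z, p z * log (p z / q z) ∂μ| ≤ K := by
  have h_pointwise : ∀ᵐ z ∂μ, ‖p z * log (p z / r z) - p z * log (p z / q z)‖ ≤ K * p z := by
    filter_upwards [hp_nonneg, hq, hr, hK] with z hpz hqz hrz hKz
    rw [mul_log_div_sub_mul_log_div hqz hrz, norm_mul, Real.norm_of_nonneg hpz, mul_comm]
    exact mul_le_mul_of_nonneg_right hKz hpz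
  rw [← integral_sub hpr hpq, ← Real.norm_eq_abs]
  simpa only [integral_const_mul, hp_mass, mul_one] using
    norm_integral_le_of_norm_le (hp.const_mul K) h_pointwise

lemma abs_integral_mul_log_div_sub_le_of_abs_sub_le {c ε : ℝ} (hc : 0 < c)
    (hp : Integrable p μ) (hp_mass : ∫ z, p z ∂μ = 1) (hp_nonneg : 0 ≤ᵐ[μ] p)
    (hq : ∀ᵐ z ∂μ, c ≤ q z) (hrq : ∀ᵐ z ∂μ, |r z - q z| ≤ ε) (hε : ε ≤ c / 2)
    (hpr : Integrable (fun z => p z * log (p z / r z)) μ)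
    (hpq : Integrable (fun z => p z * log (p z / q z)) μ) :
    |∫ z, p z * log (p z / r z) ∂μ - ∫ z, p z * log (p z / q z) ∂μ| ≤ 2 * ε / c := by
  have hr : ∀ᵐ z ∂μ, c / 2 ≤ r z := by
    filter_upwards [hq, hrq] with z hqz hrqz
    linarith [neg_abs_le (r z - q z)]
  refine abs_integral_mul_log_div_sub_le hp hp_mass hp_nonneg
    (hq.mono fun z hqz => (hc.trans_le hqz).ne') (hr.mono fun z hrz => ((half_pos hc).trans_le hrz).ne') ?_ hpr hpq
  filter_upwards [hq, hr, hrq] with z hqz hrz hrqz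
  calc |log (q z) - log (r z)| ≤ |q z - r z| / (c / 2) :=
        abs_log_sub_log_le_abs_sub_div (by positivity) (by linarith) hrz
    _ ≤ ε / (c / 2) := by rw [abs_sub_comm]; gcongr
    _ = 2 * ε / c := by field_simp

end

theorem mm_klDiv_perturbation_bound_general {Z : Type*} [MeasurableSpace Z] (μ : Measure Z)
    (qθ qφ qtθ qtφ : Z → ℝ) (c εθ εφ : ℝ) (hc : 0 < c)
    (hqθint : Integrable qθ μ) (hqθmass : ∫ z, qθ z ∂μ = 1) (hqθc : ∀ᵐ z ∂μ, c ≤ qθ z)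
    (hqφint : Integrable qφ μ) (hqφmass : ∫ z, qφ z ∂μ = 1) (hqφc : ∀ᵐ z ∂μ, c ≤ qφ z)
    (hεθ : ∀ᵐ z ∂μ, |qtθ z - qθ z| ≤ εθ) (hεθle : εθ ≤ c / 2)
    (hεφ : ∀ᵐ z ∂μ, |qtφ z - qφ z| ≤ εφ) (hεφle : εφ ≤ c / 2)
    (h₁ : Integrable (fun z => qθ z * Real.log (qθ z / qtφ z)) μ)
    (h₂ : Integrable (fun z => qθ z * Real.log (qθ z / qφ z)) μ)
    (h₃ : Integrable (fun z => qφ z * Real.log (qφ z / qtθ z)) μ)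
    (h₄ : Integrable (fun z => qφ z * Real.log (qφ z / qθ z)) μ) :
    |(1 / 2) * (∫ z, qθ z * Real.log (qθ z / qtφ z) ∂μ - ∫ z, qθ z * Real.log (qθ z / qφ z) ∂μ)
      + (1 / 2) * (∫ z, qφ z * Real.log (qφ z / qtθ z) ∂μ
          - ∫ z, qφ z * Real.log (qφ z / qθ z) ∂μ)|
      ≤ (εθ + εφ) / c := by
  have nonneg_of_ge {f : Z → ℝ} (hf : ∀ᵐ z ∂μ, c ≤ f z) : 0 ≤ᵐ[μ] f :=
    hf.mono fun z hfz => hc.le.trans hfz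
  have hθ := abs_integral_mul_log_div_sub_le_of_abs_sub_le hc hqθint hqθmass
    (nonneg_of_ge hqθc) hqφc hεφ hεφle h₁ h₂
  have hφ := abs_integral_mul_log_div_sub_le_of_abs_sub_le hc hqφint hqφmass
    (nonneg_of_ge hqφc) hqθc hεθ hεθle h₃ h₄
  obtain ⟨hθ_lower, hθ_upper⟩ := abs_le.mp hθ
  obtain ⟨hφ_lower, hφ_upper⟩ := abs_le.mp hφ
  have h_split : (εθ + εφ) / c = 1 / 2 * (2 * εφ / c) + 1 / 2 * (2 * εθ / c) := by ring
  rw [abs_le, h_split]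
  constructor <;> linarith

/-- Multimodal KDE perturbation bound: the symmetrized difference of KL divergences
against smoothed densities is controlled by the sup-norm KDE errors. -/
theorem mm_klDiv_perturbation_bound {Z : Type*} [MeasurableSpace Z] (μ : Measure Z)
    [IsFiniteMeasure μ] (qθ qφ qtθ qtφ : Z → ℝ) (c εθ εφ : ℝ) (hc : 0 < c)
    (hqθint : Integrable qθ μ) (hqθmass : ∫ z, qθ z ∂μ = 1) (hqθc : ∀ᵐ z ∂μ, c ≤ qθ z)
    (hqφint : Integrable qφ μ) (hqφmass : ∫ z, qφ z ∂μ = 1) (hqφc : ∀ᵐ z ∂μ, c ≤ qφ z)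
    (hqtθint : Integrable qtθ μ) (hqtθmass : ∫ z, qtθ z ∂μ = 1)
    (hqtθpos : ∀ᵐ z ∂μ, 0 < qtθ z)
    (hqtφint : Integrable qtφ μ) (hqtφmass : ∫ z, qtφ z ∂μ = 1)
    (hqtφpos : ∀ᵐ z ∂μ, 0 < qtφ z)
    (hεθ : ∀ᵐ z ∂μ, |qtθ z - qθ z| ≤ εθ) (hεθle : εθ ≤ c / 2)
    (hεφ : ∀ᵐ z ∂μ, |qtφ z - qφ z| ≤ εφ) (hεφle : εφ ≤ c / 2)
    (h₁ : Integrable (fun z => qθ z * Real.log (qθ z / qtφ z)) μ)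
    (h₂ : Integrable (fun z => qθ z * Real.log (qθ z / qφ z)) μ)
    (h₃ : Integrable (fun z => qφ z * Real.log (qφ z / qtθ z)) μ)
    (h₄ : Integrable (fun z => qφ z * Real.log (qφ z / qθ z)) μ) :
    |(1 / 2) * (∫ z, qθ z * Real.log (qθ z / qtφ z) ∂μ - ∫ z, qθ z * Real.log (qθ z / qφ z) ∂μ)
      + (1 / 2) * (∫ z, qφ z * Real.log (qφ z / qtθ z) ∂μ
          - ∫ z, qφ z * Real.log (qφ z / qθ z) ∂μ)|
      ≤ (εθ + εφ) / c :=
  mm_klDiv_perturbation_bound_general μ qθ qφ qtθ qtφ c εθ εφ hc hqθint hqθmass hqθc hqφint hqφmass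
    hqφc hεθ hεθle hεφ hεφle h₁ h₂ h₃ h₄
end

section
/- Let P, S : ℝᵖ → ℝ be differentiable with 0 < m ≤ P ≤ M, ‖∇P‖ ≤ G, S ≥ N·m, and ‖∇S‖ ≤ N·G at a given point, for constants m, M, G > 0 and N ≥ 1. Then the difference of log-gradients satisfies ‖∇log(P + S) − ∇log S‖ ≤ G/(N·m) + M·G/(N·m²), which is O(1/N). -/
/-! The chain rule gives `∇log(P+S) - ∇log S = ∇P/(P+S) - (P/(S(P+S)))·∇S`; since
`P + S ≥ S ≥ Nm`, the first term is at most `G/(Nm)` and the second at most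
`(M/(Nm)²)·NG = MG/(Nm²)`. -/

open Real

theorem div_mul_add_le_div_sq {p s c M : ℝ} (hc : 0 < c) (hcs : c ≤ s) (hp : 0 ≤ p)
    (hpM : p ≤ M) : p / (s * (p + s)) ≤ M / c ^ 2 := by
  rw [sq]
  exact div_le_div₀ (hp.trans hpM) hpM (mul_pos hc hc)
    (mul_le_mul hcs (by linarith) hc.le (by linarith))

theorem norm_inv_add_smul_sub_smul_le {F : Type*} [SeminormedAddCommGroup F] [NormedSpace ℝ F]
    {a b : F} {p s m M G N : ℝ} (hN : 0 < N) (hm : 0 < m) (hmp : m ≤ p) (hpM : p ≤ M)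
    (hs : N * m ≤ s) (ha : ‖a‖ ≤ G) (hb : ‖b‖ ≤ N * G) :
    ‖(p + s)⁻¹ • a - (p / (s * (p + s))) • b‖ ≤ G / (N * m) + M * G / (N * m ^ 2) := by
  have hNm : 0 < N * m := mul_pos hN hm
  have hp : 0 < p := hm.trans_le hmp
  have hs0 : 0 < s := hNm.trans_le hs
  have hinv : (p + s)⁻¹ ≤ (N * m)⁻¹ := inv_anti₀ hNm (by linarith)
  have hfrac : p / (s * (p + s)) ≤ M / (N * m) ^ 2 := div_mul_add_le_div_sq hNm hs hp.le hpM
  calc ‖(p + s)⁻¹ • a - (p / (s * (p + s))) • b‖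
      ≤ (p + s)⁻¹ * ‖a‖ + p / (s * (p + s)) * ‖b‖ := by
        refine (norm_sub_le _ _).trans_eq ?_
        rw [norm_smul, norm_smul, norm_of_nonneg (by positivity), norm_of_nonneg (by positivity)]
    _ ≤ (N * m)⁻¹ * G + M / (N * m) ^ 2 * (N * G) := by
        have hfrac0 : 0 ≤ p / (s * (p + s)) := by positivity
        exact add_le_add (mul_le_mul hinv ha (norm_nonneg a) (by positivity))
          (mul_le_mul hfrac hb (norm_nonneg b) (hfrac0.trans hfrac))
    _ = G / (N * m) + M * G / (N * m ^ 2) := by field_simp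

variable {E : Type*} [NormedAddCommGroup E] [NormedSpace ℝ E]

theorem fderiv_log_add_sub_fderiv_log {f g : E → ℝ} {x : E}
    (hf : DifferentiableAt ℝ f x) (hg : DifferentiableAt ℝ g x)
    (hg0 : g x ≠ 0) (hfg : f x + g x ≠ 0) :
    fderiv ℝ (fun y => log (f y + g y)) x - fderiv ℝ (fun y => log (g y)) x
      = (f x + g x)⁻¹ • fderiv ℝ f x - (f x / (g x * (f x + g x))) • fderiv ℝ g x := by
  have hsum : HasFDerivAt (fun y => log (f y + g y))
      ((f x + g x)⁻¹ • (fderiv ℝ f x + fderiv ℝ g x)) x :=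
    (hf.hasFDerivAt.add hg.hasFDerivAt).log hfg
  rw [hsum.fderiv, (hg.hasFDerivAt.log hg0).fderiv]
  have hcoeff : (f x + g x)⁻¹ - (g x)⁻¹ = -(f x / (g x * (f x + g x))) := by
    field_simp
    ring
  rw [smul_add, add_sub_assoc, ← sub_smul, hcoeff, neg_smul, ← sub_eq_add_neg]

theorem log_partition_gradient_difference_bound_general {p : ℕ}
    (P S : EuclideanSpace ℝ (Fin p) → ℝ) (x : EuclideanSpace ℝ (Fin p))
    (hPd : DifferentiableAt ℝ P x) (hSd : DifferentiableAt ℝ S x)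
    (m M G N : ℝ) (hm : 0 < m) (hN : 1 ≤ N)
    (hmP : m ≤ P x) (hPM : P x ≤ M) (hPG : ‖fderiv ℝ P x‖ ≤ G)
    (hS : N * m ≤ S x) (hSG : ‖fderiv ℝ S x‖ ≤ N * G) :
    ‖fderiv ℝ (fun y => Real.log (P y + S y)) x
        - fderiv ℝ (fun y => Real.log (S y)) x‖
      ≤ G / (N * m) + M * G / (N * m ^ 2) := by
  have hN0 : 0 < N := one_pos.trans_le hN
  have hS0 : 0 < S x := (mul_pos hN0 hm).trans_le hS
  have hPS0 : 0 < P x + S x := by linarith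
  rw [fderiv_log_add_sub_fderiv_log hPd hSd hS0.ne' hPS0.ne']
  exact norm_inv_add_smul_sub_smul_le hN0 hm hmP hPM hS hPG hSG

/-- Removing the positive term from the log-partition gradient: under the stated
pointwise bounds, `‖∇log(P+S) - ∇log S‖ ≤ G/(N·m) + M·G/(N·m²)`, i.e. `O(1/N)`. -/
theorem log_partition_gradient_difference_bound {p : ℕ}
    (P S : EuclideanSpace ℝ (Fin p) → ℝ) (x : EuclideanSpace ℝ (Fin p))
    (hPd : DifferentiableAt ℝ P x) (hSd : DifferentiableAt ℝ S x)
    (m M G N : ℝ) (hm : 0 < m) (hM : 0 < M) (hG : 0 < G) (hN : 1 ≤ N)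
    (hmP : m ≤ P x) (hPM : P x ≤ M) (hPG : ‖fderiv ℝ P x‖ ≤ G)
    (hS : N * m ≤ S x) (hSG : ‖fderiv ℝ S x‖ ≤ N * G) :
    ‖fderiv ℝ (fun y => Real.log (P y + S y)) x
        - fderiv ℝ (fun y => Real.log (S y)) x‖
      ≤ G / (N * m) + M * G / (N * m ^ 2) :=
  log_partition_gradient_difference_bound_general P S x hPd hSd m M G N hm hN hmP hPM hPG hS hSG
end
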